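/- Let λ₁ > 0, λ₂ > 0, α > 0 and θ ∈ [-1, 1], let D = λ₂α/(λ₁+λ₂α) + θλ₁·(2/(2λ₁+λ₂α) + 1/(λ₁+2λ₂α) - 2/(λ₁+λ₂α)), K = λ₁/D, let f^w(x) = K e^{-λ₁x}(1 - e^{-λ₂αx})(1 - θe^{-λ₂αx}(1 - 2e^{-λ₁x})) and F^w(x) = ∫₀^x f^w(t) dt. Then the hazard rate function h^w(x) = f^w(x)/(1 - F^w(x)) tends to λ₁ as x tends to +∞. -/

import Mathlib

/-!
Write `a = λ₂ α`. The density is `K e^{-λ₁x} N(x)` where `N → 1`, and integrating it monomial by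
monomial in `e^{-λ₁x}` and `e^{-ax}` shows that its tail mass is `K e^{-λ₁x} Q(x)` with
`Q → 1/λ₁`; the total mass `K Q(0) = K D/λ₁` is `1`. So `1 - F^w` is the tail mass, the factor
`K e^{-λ₁x}` cancels in the hazard rate, and `h^w = N/Q → λ₁`.
-/

open MeasureTheory Filter Topology Real

lemma hasDerivAt_exp_neg_mul (r x : ℝ) :
    HasDerivAt (fun t => exp (-r * t)) (-r * exp (-r * x)) x := by
  simpa [mul_comm] using ((hasDerivAt_id x).const_mul (-r)).exp

lemma tendsto_exp_neg_mul_atTop {r : ℝ} (hr : 0 < r) :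
    Tendsto (fun x => exp (-r * x)) atTop (𝓝 0) :=
  tendsto_exp_comp_nhds_zero.2 (tendsto_id.const_mul_atTop_of_neg (neg_neg_of_pos hr))

noncomputable section

namespace GWED

variable (l₁ a θ : ℝ)

def densityFactor (x : ℝ) : ℝ :=
  (1 - exp (-a * x)) * (1 - θ * exp (-a * x) * (1 - 2 * exp (-l₁ * x)))

/-- `exp (-l₁ x) * survivalFactor l₁ a θ x = ∫ t in Ioi x, exp (-l₁ t) * densityFactor l₁ a θ t`. -/
def survivalFactor (x : ℝ) : ℝ :=
  1 / l₁ - (1 + θ) / (l₁ + a) * exp (-a * x)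
    + 2 * θ / (2 * l₁ + a) * (exp (-l₁ * x) * exp (-a * x))
    + θ / (l₁ + 2 * a) * exp (-a * x) ^ 2
    - θ / (l₁ + a) * (exp (-l₁ * x) * exp (-a * x) ^ 2)

variable {l₁ a θ}

lemma hasDerivAt_exp_mul_survivalFactor (hl₁ : 0 < l₁) (ha : 0 ≤ a) (x : ℝ) :
    HasDerivAt (fun t => exp (-l₁ * t) * survivalFactor l₁ a θ t)
      (-(exp (-l₁ * x) * densityFactor l₁ a θ x)) x := by
  have hE := hasDerivAt_exp_neg_mul l₁ x
  have hu := hasDerivAt_exp_neg_mul a x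
  have hQ := (((((hasDerivAt_const x (1 / l₁)).sub (hu.const_mul ((1 + θ) / (l₁ + a)))).add
    ((hE.mul hu).const_mul (2 * θ / (2 * l₁ + a)))).add
    ((hu.pow 2).const_mul (θ / (l₁ + 2 * a)))).sub
    ((hE.mul (hu.pow 2)).const_mul (θ / (l₁ + a))))
  refine (hE.mul hQ).congr_deriv ?_
  have : l₁ + a ≠ 0 := by positivity
  have : 2 * l₁ + a ≠ 0 := by positivity
  have : l₁ + 2 * a ≠ 0 := by positivity
  simp only [Pi.add_apply, Pi.sub_apply, Pi.mul_apply, Pi.pow_apply, densityFactor,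
    Nat.cast_ofNat]
  field_simp
  ring

lemma integral_exp_mul_densityFactor (hl₁ : 0 < l₁) (ha : 0 ≤ a) (x : ℝ) :
    ∫ t in (0 : ℝ)..x, exp (-l₁ * t) * densityFactor l₁ a θ t
      = survivalFactor l₁ a θ 0 - exp (-l₁ * x) * survivalFactor l₁ a θ x := by
  have hcont : Continuous fun t => exp (-l₁ * t) * densityFactor l₁ a θ t := by
    unfold densityFactor; fun_prop
  rw [intervalIntegral.integral_eq_sub_of_hasDerivAt
    (fun t _ => (hasDerivAt_exp_mul_survivalFactor hl₁ ha t).neg.congr_deriv (neg_neg _))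
    (hcont.intervalIntegrable 0 x)]
  simp only [Pi.neg_apply, mul_zero, Real.exp_zero, one_mul]
  ring

lemma mul_survivalFactor_zero (hl₁ : 0 < l₁) (ha : 0 ≤ a) :
    l₁ * survivalFactor l₁ a θ 0
      = a / (l₁ + a) + θ * l₁ * (2 / (2 * l₁ + a) + 1 / (l₁ + 2 * a) - 2 / (l₁ + a)) := by
  have : l₁ + a ≠ 0 := by positivity
  have : 2 * l₁ + a ≠ 0 := by positivity
  have : l₁ + 2 * a ≠ 0 := by positivity
  simp only [survivalFactor, mul_zero, Real.exp_zero]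
  field_simp
  ring

lemma survivalFactor_zero_pos (hl₁ : 0 < l₁) (ha : 0 < a) (hθ : θ ∈ Set.Icc (-1 : ℝ) 1) :
    0 < survivalFactor l₁ a θ 0 := by
  have hclosed : l₁ * survivalFactor l₁ a θ 0
      = a * ((2 * l₁ + a) * (l₁ + 2 * a) + θ * l₁ * (a - l₁))
        / ((l₁ + a) * (2 * l₁ + a) * (l₁ + 2 * a)) := by
    rw [mul_survivalFactor_zero hl₁ ha.le]
    field_simp
    ring
  -- `|θ l₁ (a - l₁)| ≤ l₁ (a + l₁) < (2 l₁ + a) (l₁ + 2 a)`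
  have hnum : 0 < (2 * l₁ + a) * (l₁ + 2 * a) + θ * l₁ * (a - l₁) := by
    obtain ⟨h1, h2⟩ := hθ
    nlinarith [mul_pos hl₁ ha, mul_pos hl₁ hl₁, mul_nonneg (sub_nonneg.2 h2) (mul_pos hl₁ hl₁).le,
      mul_nonneg (neg_le_iff_add_nonneg.1 h1) (mul_pos hl₁ ha).le]
  have : 0 < l₁ * survivalFactor l₁ a θ 0 := by rw [hclosed]; positivity
  exact pos_of_mul_pos_right this hl₁.le

lemma tendsto_densityFactor (hl₁ : 0 < l₁) (ha : 0 < a) :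
    Tendsto (densityFactor l₁ a θ) atTop (𝓝 1) := by
  have hE := tendsto_exp_neg_mul_atTop hl₁
  have hu := tendsto_exp_neg_mul_atTop ha
  unfold densityFactor
  simpa using ((tendsto_const_nhds (x := (1 : ℝ))).sub hu).mul
    ((tendsto_const_nhds (x := (1 : ℝ))).sub (((tendsto_const_nhds (x := θ)).mul hu).mul
      (tendsto_const_nhds.sub ((tendsto_const_nhds (x := (2 : ℝ))).mul hE))))

lemma tendsto_survivalFactor (hl₁ : 0 < l₁) (ha : 0 < a) :
    Tendsto (survivalFactor l₁ a θ) atTop (𝓝 (1 / l₁)) := by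
  have hE := tendsto_exp_neg_mul_atTop hl₁
  have hu := tendsto_exp_neg_mul_atTop ha
  unfold survivalFactor
  simpa using ((((tendsto_const_nhds (x := 1 / l₁)).sub (hu.const_mul ((1 + θ) / (l₁ + a)))).add
    ((hE.mul hu).const_mul (2 * θ / (2 * l₁ + a)))).add
    ((hu.pow 2).const_mul (θ / (l₁ + 2 * a)))).sub ((hE.mul (hu.pow 2)).const_mul (θ / (l₁ + a)))

end GWED

end

open GWED in
theorem gwed_hazard_rate_limit_at_top
    (l₁ l₂ α θ : ℝ) (hl₁ : 0 < l₁) (hl₂ : 0 < l₂) (hα : 0 < α)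
    (hθ : θ ∈ Set.Icc (-1 : ℝ) 1)
    (D K : ℝ)
    (hD : D = l₂ * α / (l₁ + l₂ * α)
        + θ * l₁ * (2 / (2 * l₁ + l₂ * α) + 1 / (l₁ + 2 * l₂ * α)
          - 2 / (l₁ + l₂ * α)))
    (hK : K = l₁ / D)
    (fw Fw : ℝ → ℝ)
    (hfw : ∀ x : ℝ, fw x = K * Real.exp (-l₁ * x) * (1 - Real.exp (-l₂ * α * x))
        * (1 - θ * Real.exp (-l₂ * α * x) * (1 - 2 * Real.exp (-l₁ * x))))
    (hFw : ∀ x : ℝ, Fw x = ∫ t in (0 : ℝ)..x, fw t) :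
    Tendsto (fun x => fw x / (1 - Fw x)) atTop (nhds l₁) := by
  set a := l₂ * α with ha_def
  have ha : 0 < a := mul_pos hl₂ hα
  have hD' : D = l₁ * survivalFactor l₁ a θ 0 := by
    rw [hD, mul_survivalFactor_zero hl₁ ha.le, ha_def]
    ring
  have hK1 : K * survivalFactor l₁ a θ 0 = 1 := by
    rw [hK, hD']
    field_simp [(survivalFactor_zero_pos hl₁ ha hθ).ne']
  have hdensity : ∀ x, fw x = K * (exp (-l₁ * x) * densityFactor l₁ a θ x) := by
    intro x
    rw [hfw, densityFactor, show -l₂ * α * x = -a * x by rw [ha_def]; ring]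
    ring
  have hsurvival : ∀ x, 1 - Fw x = K * (exp (-l₁ * x) * survivalFactor l₁ a θ x) := by
    intro x
    simp only [hFw, hdensity, intervalIntegral.integral_const_mul,
      integral_exp_mul_densityFactor hl₁ ha.le]
    linear_combination -hK1
  have hK0 : K ≠ 0 := by rintro rfl; simp at hK1
  have hratio : ∀ x, fw x / (1 - Fw x) = densityFactor l₁ a θ x / survivalFactor l₁ a θ x := by
    intro x
    rw [hdensity, hsurvival, ← mul_assoc, ← mul_assoc,
      mul_div_mul_left _ _ (mul_ne_zero hK0 (exp_pos _).ne')]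
  refine Tendsto.congr (fun x => (hratio x).symm) ?_
  have hlim := (tendsto_densityFactor (θ := θ) hl₁ ha).div
    (tendsto_survivalFactor (θ := θ) hl₁ ha) (one_div_ne_zero hl₁.ne')
  rwa [one_div_one_div] at hlim
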